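/- arXiv:1405.5873 — 8 statements merged into one kernel-verified Lean document; each statement's English description precedes it below -/
import Mathlib

section
/- Water-filling characterization of the one-sided problem: Let I be a nonempty finite index set, let b : I → ℝ satisfy b_i > 0 for all i ∈ I, let A > 0, and let e be a real with 0 < e ≤ |I|·A². Then there exists λ > 0 such that ∑_{i∈I} (min(b_i/λ, A))² = e, and the vector a* defined by a*_i := min(b_i/λ, A) is the unique minimizer of the function a ↦ −∑_{i∈I} a_i·b_i over the feasible set {a : I → ℝ | 0 ≤ a_i ≤ A for all i, and ∑_{i∈I} a_i² ≤ e}. -/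
/-!
Read `λ` as the Lagrange multiplier of the energy constraint. Pointwise, `c = min (b / λ) A`
maximizes the concave quadratic `x ↦ x b - λ x² / 2` on `x ≤ A`, with a quadratic margin:
`x b - λ x² / 2 + λ (x - c)² / 2 ≤ c b - λ c² / 2`. Summing over `I` and using
`∑ a² ≤ e = ∑ c²` gives `λ/2 · ∑ (a - c)² ≤ ∑ c b - ∑ a b` for every feasible `a`, which is
optimality and uniqueness at once. The level `λ` exists by the intermediate value theorem: the
energy `λ ↦ ∑ min (b / λ) A ²` equals `|I| A²` for small `λ` and is at most `∑ b² / λ²`.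
-/

open Finset

lemma mul_sub_sq_add_sq_sub_min_div_le {lam x b A : ℝ} (hlam : 0 < lam) (hx : x ≤ A) :
    x * b - lam / 2 * x ^ 2 + lam / 2 * (x - min (b / lam) A) ^ 2 ≤
      min (b / lam) A * b - lam / 2 * min (b / lam) A ^ 2 := by
  rcases le_total (b / lam) A with h | h
  · rw [min_eq_left h]
    have hb : b = lam * (b / lam) := by field_simp
    nlinarith
  · rw [min_eq_right h]
    have hb : lam * A ≤ b := by rwa [le_div_iff₀' hlam] at h
    nlinarith

section Optimality

variable {ι : Type*} {I : Finset ι} {b a : ι → ℝ} {A lam : ℝ}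

lemma half_mul_sum_sq_sub_min_div_le (hlam : 0 < lam) (ha : ∀ i ∈ I, a i ≤ A)
    (hae : ∑ i ∈ I, a i ^ 2 ≤ ∑ i ∈ I, min (b i / lam) A ^ 2) :
    lam / 2 * ∑ i ∈ I, (a i - min (b i / lam) A) ^ 2 ≤
      ∑ i ∈ I, min (b i / lam) A * b i - ∑ i ∈ I, a i * b i := by
  have hsum := sum_le_sum fun i hi =>
    mul_sub_sq_add_sq_sub_min_div_le (b := b i) hlam (ha i hi)
  simp only [sum_add_distrib, sum_sub_distrib, ← mul_sum] at hsum
  nlinarith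

lemma eqOn_min_div_of_sum_mul_eq (hlam : 0 < lam) (ha : ∀ i ∈ I, a i ≤ A)
    (hae : ∑ i ∈ I, a i ^ 2 ≤ ∑ i ∈ I, min (b i / lam) A ^ 2)
    (heq : ∑ i ∈ I, a i * b i = ∑ i ∈ I, min (b i / lam) A * b i) :
    ∀ i ∈ I, a i = min (b i / lam) A := by
  have hgap := half_mul_sum_sq_sub_min_div_le hlam ha hae
  have hzero : ∑ i ∈ I, (a i - min (b i / lam) A) ^ 2 = 0 :=
    le_antisymm (by nlinarith) (sum_nonneg fun i _ => sq_nonneg _)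
  intro i hi
  rw [sum_eq_zero_iff_of_nonneg fun i _ => sq_nonneg _] at hzero
  exact sub_eq_zero.mp (pow_eq_zero_iff two_ne_zero |>.mp (hzero i hi))

end Optimality

section WaterLevel

variable {ι : Type*} {I : Finset ι} {b : ι → ℝ} {A lam : ℝ}

lemma sum_sq_min_div_eq_card_mul_sq (hlam : 0 < lam) (hb : ∀ i ∈ I, lam * A ≤ b i) :
    ∑ i ∈ I, min (b i / lam) A ^ 2 = I.card * A ^ 2 := by
  rw [← nsmul_eq_mul, ← sum_const]
  refine sum_congr rfl fun i hi => ?_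
  rw [min_eq_right ((le_div_iff₀' hlam).mpr (hb i hi))]

lemma sum_sq_min_div_le_sum_sq_div (hlam : 0 < lam) (hb : ∀ i ∈ I, 0 ≤ b i) (hA : 0 ≤ A) :
    ∑ i ∈ I, min (b i / lam) A ^ 2 ≤ (∑ i ∈ I, b i ^ 2) / lam ^ 2 := by
  rw [sum_div]
  refine sum_le_sum fun i hi => ?_
  rw [← div_pow]
  exact pow_le_pow_left₀ (le_min (div_nonneg (hb i hi) hlam.le) hA) (min_le_left _ _) 2

lemma exists_pos_sum_sq_min_div_eq (hb : ∀ i ∈ I, 0 < b i) (hA : 0 < A) {e : ℝ} (he : 0 < e)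
    (heA : e ≤ I.card * A ^ 2) :
    ∃ lam > 0, ∑ i ∈ I, min (b i / lam) A ^ 2 = e := by
  have hI : I.Nonempty := card_pos.mp <| Nat.pos_of_ne_zero fun h => by
    rw [h, Nat.cast_zero, zero_mul] at heA
    linarith
  set l₀ := I.inf' hI b / A
  have hl₀ : 0 < l₀ := div_pos ((lt_inf'_iff hI).mpr hb) hA
  set l₁ := max l₀ √((∑ i ∈ I, b i ^ 2) / e)
  have hl₀₁ : l₀ ≤ l₁ := le_max_left _ _
  have hl₁ : 0 < l₁ := hl₀.trans_le hl₀₁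
  have hlow : ∑ i ∈ I, min (b i / l₀) A ^ 2 = I.card * A ^ 2 :=
    sum_sq_min_div_eq_card_mul_sq hl₀ fun i hi => by
      rw [div_mul_cancel₀ _ hA.ne']
      exact inf'_le _ hi
  have hhigh : ∑ i ∈ I, min (b i / l₁) A ^ 2 ≤ e := by
    refine (sum_sq_min_div_le_sum_sq_div hl₁ (fun i hi => (hb i hi).le) hA.le).trans ?_
    rw [div_le_iff₀ (by positivity), ← div_le_iff₀' he]
    exact (Real.sqrt_le_iff.mp (le_max_right _ _)).2
  have hne : ∀ l ∈ Set.Icc l₀ l₁, l ≠ 0 := fun l hl => (hl₀.trans_le hl.1).ne'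
  have hcont : ContinuousOn (fun l => ∑ i ∈ I, min (b i / l) A ^ 2) (Set.Icc l₀ l₁) := by
    fun_prop (disch := assumption)
  obtain ⟨lam, hlam, hsum⟩ := intermediate_value_Icc' hl₀₁ hcont ⟨hhigh, hlow ▸ heA⟩
  exact ⟨lam, hl₀.trans_le hlam.1, hsum⟩

end WaterLevel

theorem waterfilling_characterization_general {ι : Type*} (I : Finset ι)
    (b : ι → ℝ) (hb : ∀ i ∈ I, 0 < b i) (A : ℝ) (hA : 0 < A)
    (e : ℝ) (he : 0 < e) (heA : e ≤ (I.card : ℝ) * A ^ 2) :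
    ∃ lam : ℝ, 0 < lam ∧
      (∑ i ∈ I, (min (b i / lam) A) ^ 2 = e) ∧
      (∀ a : ι → ℝ, (∀ i ∈ I, 0 ≤ a i ∧ a i ≤ A) → (∑ i ∈ I, (a i) ^ 2) ≤ e →
        (-∑ i ∈ I, (min (b i / lam) A) * b i) ≤ -∑ i ∈ I, a i * b i) ∧
      (∀ a : ι → ℝ, (∀ i ∈ I, 0 ≤ a i ∧ a i ≤ A) → (∑ i ∈ I, (a i) ^ 2) ≤ e →
        (-∑ i ∈ I, a i * b i) = (-∑ i ∈ I, (min (b i / lam) A) * b i) →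
        ∀ i ∈ I, a i = min (b i / lam) A) := by
  obtain ⟨lam, hlam, hsum⟩ := exists_pos_sum_sq_min_div_eq hb hA he heA
  refine ⟨lam, hlam, hsum, fun a ha hae => ?_, fun a ha hae heq => ?_⟩
  · have hgap := half_mul_sum_sq_sub_min_div_le hlam (fun i hi => (ha i hi).2) (hsum ▸ hae)
    have : 0 ≤ lam / 2 * ∑ i ∈ I, (a i - min (b i / lam) A) ^ 2 := by positivity
    linarith
  · exact eqOn_min_div_of_sum_mul_eq hlam (fun i hi => (ha i hi).2) (hsum ▸ hae) (neg_inj.mp heq)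

/-- Water-filling characterization of the one-sided distance-bound problem:
there is a water level `lam > 0` such that `a* i = min (b i / lam) A` exhausts the
energy budget `e` and is the unique minimizer of `a ↦ -∑ i ∈ I, a i * b i`
over `{a | ∀ i ∈ I, 0 ≤ a i ≤ A, ∑ i ∈ I, (a i)^2 ≤ e}`. -/
theorem waterfilling_characterization {ι : Type*} (I : Finset ι) (hI : I.Nonempty)
    (b : ι → ℝ) (hb : ∀ i ∈ I, 0 < b i) (A : ℝ) (hA : 0 < A)
    (e : ℝ) (he : 0 < e) (heA : e ≤ (I.card : ℝ) * A ^ 2) :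
    ∃ lam : ℝ, 0 < lam ∧
      (∑ i ∈ I, (min (b i / lam) A) ^ 2 = e) ∧
      (∀ a : ι → ℝ, (∀ i ∈ I, 0 ≤ a i ∧ a i ≤ A) → (∑ i ∈ I, (a i) ^ 2) ≤ e →
        (-∑ i ∈ I, (min (b i / lam) A) * b i) ≤ -∑ i ∈ I, a i * b i) ∧
      (∀ a : ι → ℝ, (∀ i ∈ I, 0 ≤ a i ∧ a i ≤ A) → (∑ i ∈ I, (a i) ^ 2) ≤ e →
        (-∑ i ∈ I, a i * b i) = (-∑ i ∈ I, (min (b i / lam) A) * b i) →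
        ∀ i ∈ I, a i = min (b i / lam) A) :=
  waterfilling_characterization_general I b hb A hA e he heA
end

section
/- Exact optimum when both sequences discard the same coefficients: Let P3 be a nonempty finite index set, let A, B > 0, and let e_x, e_q ≥ 0 satisfy e_x ≤ |P3|·A² and e_q ≤ |P3|·B². Then the minimum of (a, b) ↦ −∑_{l∈P3} a_l·b_l over all a, b : P3 → ℝ with 0 ≤ a_l ≤ A, 0 ≤ b_l ≤ B, ∑_{l∈P3} a_l² ≤ e_x and ∑_{l∈P3} b_l² ≤ e_q equals −√(e_x)·√(e_q), and it is attained at the constant vectors a_l = √(e_x/|P3|), b_l = √(e_q/|P3|). -/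
/-! By Cauchy–Schwarz, `∑ a l * b l ≤ √(∑ a l ^ 2) * √(∑ b l ^ 2) ≤ √eX * √eQ` on the whole
feasible set, even without the caps. Spreading each budget evenly, `a l = √(eX / |P3|)` and
`b l = √(eQ / |P3|)` use the budgets exactly and achieve equality; they respect the caps because
`eX ≤ |P3| A²` and `eQ ≤ |P3| B²`. -/

open Finset

namespace Real

variable {n e f : ℝ}

lemma sum_mul_le_sqrt_mul_sqrt_of_sum_sq_le {ι : Type*} (s : Finset ι) {a b : ι → ℝ}
    (ha : ∑ i ∈ s, a i ^ 2 ≤ e) (hb : ∑ i ∈ s, b i ^ 2 ≤ f) :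
    ∑ i ∈ s, a i * b i ≤ √e * √f :=
  (sum_mul_le_sqrt_mul_sqrt s a b).trans (by gcongr)

lemma sqrt_div_le_of_le_mul_sq {C : ℝ} (hn : 0 < n) (hC : 0 ≤ C) (he : e ≤ n * C ^ 2) :
    √(e / n) ≤ C :=
  (sqrt_le_left hC).mpr ((div_le_iff₀' hn).mpr he)

lemma mul_sqrt_div_sq (hn : 0 < n) (he : 0 ≤ e) : n * √(e / n) ^ 2 = e := by
  rw [sq_sqrt (by positivity)]
  field_simp

lemma mul_mul_sqrt_div_mul_sqrt_div (hn : 0 < n) :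
    n * (√(e / n) * √(f / n)) = √e * √f := by
  rw [sqrt_div' _ hn.le, sqrt_div' _ hn.le, div_mul_div_comm, mul_self_sqrt hn.le,
    mul_div_cancel₀ _ hn.ne']

end Real

/-- Exact optimum when both sequences discard the same coefficients (`P1 = P2 = ∅`):
the minimum of `-∑_{l∈P3} a l * b l` over the capped energy-bounded box equals
`-√eX · √eQ`, attained at the constant vectors `a l = √(eX/|P3|)`, `b l = √(eQ/|P3|)`. -/
theorem same_discarded_coefficients {ι : Type*} (P3 : Finset ι) (hP3 : P3.Nonempty)
    (A B : ℝ) (hA : 0 < A) (hB : 0 < B)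
    (eX eQ : ℝ) (heX : 0 ≤ eX) (heQ : 0 ≤ eQ)
    (hXA : eX ≤ (P3.card : ℝ) * A ^ 2) (hQB : eQ ≤ (P3.card : ℝ) * B ^ 2) :
    IsLeast {v : ℝ | ∃ a b : ι → ℝ,
        (∀ l ∈ P3, 0 ≤ a l ∧ a l ≤ A) ∧ (∀ l ∈ P3, 0 ≤ b l ∧ b l ≤ B) ∧
        (∑ l ∈ P3, (a l) ^ 2) ≤ eX ∧ (∑ l ∈ P3, (b l) ^ 2) ≤ eQ ∧
        v = -∑ l ∈ P3, a l * b l}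
      (-(Real.sqrt eX * Real.sqrt eQ)) ∧
    ((∀ l ∈ P3, 0 ≤ Real.sqrt (eX / P3.card) ∧ Real.sqrt (eX / P3.card) ≤ A) ∧
      (∀ l ∈ P3, 0 ≤ Real.sqrt (eQ / P3.card) ∧ Real.sqrt (eQ / P3.card) ≤ B) ∧
      (∑ _l ∈ P3, (Real.sqrt (eX / P3.card)) ^ 2) ≤ eX ∧
      (∑ _l ∈ P3, (Real.sqrt (eQ / P3.card)) ^ 2) ≤ eQ ∧
      (-∑ _l ∈ P3, Real.sqrt (eX / P3.card) * Real.sqrt (eQ / P3.card))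
        = -(Real.sqrt eX * Real.sqrt eQ)) := by
  have hn : (0 : ℝ) < P3.card := by exact_mod_cast hP3.card_pos
  have henergyX : ∑ _l ∈ P3, √(eX / P3.card) ^ 2 = eX := by
    rw [sum_const, nsmul_eq_mul, Real.mul_sqrt_div_sq hn heX]
  have henergyQ : ∑ _l ∈ P3, √(eQ / P3.card) ^ 2 = eQ := by
    rw [sum_const, nsmul_eq_mul, Real.mul_sqrt_div_sq hn heQ]
  have hvalue : ∑ _l ∈ P3, √(eX / P3.card) * √(eQ / P3.card) = √eX * √eQ := by
    rw [sum_const, nsmul_eq_mul, Real.mul_mul_sqrt_div_mul_sqrt_div hn]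
  have hcapsX : ∀ l ∈ P3, 0 ≤ √(eX / P3.card) ∧ √(eX / P3.card) ≤ A :=
    fun _ _ ↦ ⟨Real.sqrt_nonneg _, Real.sqrt_div_le_of_le_mul_sq hn hA.le hXA⟩
  have hcapsQ : ∀ l ∈ P3, 0 ≤ √(eQ / P3.card) ∧ √(eQ / P3.card) ≤ B :=
    fun _ _ ↦ ⟨Real.sqrt_nonneg _, Real.sqrt_div_le_of_le_mul_sq hn hB.le hQB⟩
  refine ⟨⟨⟨_, _, hcapsX, hcapsQ, henergyX.le, henergyQ.le, by rw [hvalue]⟩, ?_⟩,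
    hcapsX, hcapsQ, henergyX.le, henergyQ.le, by rw [hvalue]⟩
  rintro v ⟨a, b, -, -, ha, hb, rfl⟩
  exact neg_le_neg (Real.sum_mul_le_sqrt_mul_sqrt_of_sum_sq_le P3 ha hb)
end

section
/- Ordering (exchange) property of optimal solutions: Let (a, b) be an optimal pair for the compressed-distance program, and define the extended vector b̃ on P1 ∪ P3 by b̃_l = b̄_l for l ∈ P1 and b̃_l = b_l for l ∈ P3. Then for any i, j ∈ P1 ∪ P3, if b̃_i > b̃_j then a_i ≥ a_j. Symmetrically, defining ã on P2 ∪ P3 by ã_l = ā_l for l ∈ P2 and ã_l = a_l for l ∈ P3, for any i, j ∈ P2 ∪ P3, if ã_i > ã_j then b_i ≥ b_j. -/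
/-- Feasibility for the compressed-distance program. -/
def Feasible {ι : Type*} [DecidableEq ι] (P1 P2 P3 : Finset ι) (A B eX eQ : ℝ)
    (a b : ι → ℝ) : Prop :=
  (∀ l ∈ P1 ∪ P3, 0 ≤ a l ∧ a l ≤ A) ∧
  (∀ l ∈ P2 ∪ P3, 0 ≤ b l ∧ b l ≤ B) ∧
  (∑ l ∈ P1 ∪ P3, (a l) ^ 2) ≤ eX ∧
  (∑ l ∈ P2 ∪ P3, (b l) ^ 2) ≤ eQ

/-- Objective of the compressed-distance program. -/
def Obj {ι : Type*} (P1 P2 P3 : Finset ι) (bbar abar : ι → ℝ) (a b : ι → ℝ) : ℝ :=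
  -∑ l ∈ P1, a l * bbar l - ∑ l ∈ P2, abar l * b l - ∑ l ∈ P3, a l * b l

/-!
Exchange argument: if `b̃ i > b̃ j` but `a i < a j`, then swapping the entries `a i` and `a j`
keeps `(a, b)` feasible (the box constraints and the energy `∑ a_l²` are permutation invariant)
and changes the objective by `-(a j - a i) (b̃ i - b̃ j) < 0`, contradicting optimality.
The statement about `b` follows by exchanging the roles of the two vectors.
-/

open Finset

section Swap

variable {ι R : Type*} [DecidableEq ι] {s : Finset ι} {i j : ι}

lemma Finset.swap_mem (hi : i ∈ s) (hj : j ∈ s) {l : ι} (hl : l ∈ s) :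
    Equiv.swap i j l ∈ s :=
  (Equiv.bijOn_swap (s := (s : Set ι)) hi hj).mapsTo hl

lemma Finset.sum_comp_swap [AddCommMonoid R] (hi : i ∈ s) (hj : j ∈ s) (f : ι → R) :
    ∑ l ∈ s, f (Equiv.swap i j l) = ∑ l ∈ s, f l := by
  refine (Equiv.swap i j).sum_comp s f fun x hx => ?_
  obtain ⟨-, rfl | rfl⟩ := Equiv.swap_apply_ne_self_iff.1 hx <;> assumption

lemma Finset.sum_comp_swap_mul_sub_sum_mul [CommRing R] (hi : i ∈ s) (hj : j ∈ s)
    (x c : ι → R) :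
    ∑ l ∈ s, x (Equiv.swap i j l) * c l - ∑ l ∈ s, x l * c l = (x j - x i) * (c i - c j) := by
  obtain rfl | hij := eq_or_ne i j
  · simp
  rw [← sum_sub_distrib, sum_eq_add_of_mem i j hi hj hij fun l _ hl => by
    rw [Equiv.swap_apply_of_ne_of_ne hl.1 hl.2, sub_self]]
  simp only [Equiv.swap_apply_left, Equiv.swap_apply_right]
  ring

end Swap

section CompressedDistance

variable {ι : Type*} {P1 P2 P3 : Finset ι} {A B eX eQ : ℝ} {bbar abar a b : ι → ℝ}

lemma Obj.comm : Obj P2 P1 P3 abar bbar b a = Obj P1 P2 P3 bbar abar a b := by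
  simp only [Obj, mul_comm (b _), mul_comm (bbar _)]
  ring

variable [DecidableEq ι]

lemma Feasible.comm :
    Feasible P1 P2 P3 A B eX eQ a b ↔ Feasible P2 P1 P3 B A eQ eX b a := by
  unfold Feasible
  tauto

lemma Feasible.comp_swap_left (h : Feasible P1 P2 P3 A B eX eQ a b) {i j : ι}
    (hi : i ∈ P1 ∪ P3) (hj : j ∈ P1 ∪ P3) :
    Feasible P1 P2 P3 A B eX eQ (a ∘ Equiv.swap i j) b := by
  obtain ⟨ha, hb, hsa, hsb⟩ := h
  refine ⟨fun l hl => ha _ (swap_mem hi hj hl), hb, ?_, hsb⟩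
  simpa only [Function.comp_apply, sum_comp_swap hi hj fun l => a l ^ 2] using hsa

/-- `P1.piecewise bbar b` is the extended vector `b̃` of the statement. -/
lemma obj_eq_sum_mul_piecewise (h13 : Disjoint P1 P3) :
    Obj P1 P2 P3 bbar abar a b =
      -∑ l ∈ P1 ∪ P3, a l * P1.piecewise bbar b l - ∑ l ∈ P2, abar l * b l := by
  have h1 : ∑ l ∈ P1, a l * P1.piecewise bbar b l = ∑ l ∈ P1, a l * bbar l :=
    sum_congr rfl fun l hl => by rw [piecewise_eq_of_mem _ _ _ hl]
  have h3 : ∑ l ∈ P3, a l * P1.piecewise bbar b l = ∑ l ∈ P3, a l * b l :=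
    sum_congr rfl fun l hl => by
      rw [piecewise_eq_of_notMem _ _ _ (disjoint_right.1 h13 hl)]
  rw [Obj, sum_union h13, h1, h3]
  ring

lemma le_of_piecewise_lt_of_optimal (h13 : Disjoint P1 P3)
    (hfeas : Feasible P1 P2 P3 A B eX eQ a b)
    (hopt : ∀ a' b' : ι → ℝ, Feasible P1 P2 P3 A B eX eQ a' b' →
      Obj P1 P2 P3 bbar abar a b ≤ Obj P1 P2 P3 bbar abar a' b')
    {i j : ι} (hi : i ∈ P1 ∪ P3) (hj : j ∈ P1 ∪ P3)
    (hlt : P1.piecewise bbar b j < P1.piecewise bbar b i) : a j ≤ a i := by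
  by_contra! hij
  have hle := hopt _ b (hfeas.comp_swap_left hi hj)
  have hswap := sum_comp_swap_mul_sub_sum_mul hi hj a (P1.piecewise bbar b)
  rw [obj_eq_sum_mul_piecewise h13, obj_eq_sum_mul_piecewise h13] at hle
  simp only [Function.comp_apply] at hle
  linarith [mul_pos (sub_pos.2 hij) (sub_pos.2 hlt)]

end CompressedDistance

theorem ordering_property_of_optimal_solutions_general {ι : Type*} [DecidableEq ι]
    (P1 P2 P3 : Finset ι)
    (h13 : Disjoint P1 P3) (h23 : Disjoint P2 P3)
    (A B eX eQ : ℝ)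
    (bbar abar : ι → ℝ)
    (a b : ι → ℝ)
    (hfeas : Feasible P1 P2 P3 A B eX eQ a b)
    (hopt : ∀ a' b' : ι → ℝ, Feasible P1 P2 P3 A B eX eQ a' b' →
      Obj P1 P2 P3 bbar abar a b ≤ Obj P1 P2 P3 bbar abar a' b') :
    (∀ i ∈ P1 ∪ P3, ∀ j ∈ P1 ∪ P3,
      (if i ∈ P1 then bbar i else b i) > (if j ∈ P1 then bbar j else b j) →
      a j ≤ a i) ∧
    (∀ i ∈ P2 ∪ P3, ∀ j ∈ P2 ∪ P3,
      (if i ∈ P2 then abar i else a i) > (if j ∈ P2 then abar j else a j) →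
      b j ≤ b i) := by
  have hopt' : ∀ b' a' : ι → ℝ, Feasible P2 P1 P3 B A eQ eX b' a' →
      Obj P2 P1 P3 abar bbar b a ≤ Obj P2 P1 P3 abar bbar b' a' := fun b' a' h => by
    simpa only [Obj.comm] using hopt a' b' (Feasible.comm.2 h)
  exact ⟨fun i hi j hj => le_of_piecewise_lt_of_optimal h13 hfeas hopt hi hj,
    fun i hi j hj => le_of_piecewise_lt_of_optimal h23 (Feasible.comm.1 hfeas) hopt' hi hj⟩

/-- Ordering (exchange) property of optimal solutions: extending `b` by the known
magnitudes `b̄` on `P1` (resp. `a` by `ā` on `P2`), the optimal `a` (resp. `b`) is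
ordered consistently with the extended vector. -/
theorem ordering_property_of_optimal_solutions {ι : Type*} [DecidableEq ι]
    (P1 P2 P3 : Finset ι)
    (h12 : Disjoint P1 P2) (h13 : Disjoint P1 P3) (h23 : Disjoint P2 P3)
    (A B eX eQ : ℝ) (hA : 0 < A) (hB : 0 < B) (heX : 0 ≤ eX) (heQ : 0 ≤ eQ)
    (bbar abar : ι → ℝ)
    (hbbar : ∀ l ∈ P1, B ≤ bbar l) (habar : ∀ l ∈ P2, A ≤ abar l)
    (a b : ι → ℝ)
    (hfeas : Feasible P1 P2 P3 A B eX eQ a b)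
    (hopt : ∀ a' b' : ι → ℝ, Feasible P1 P2 P3 A B eX eQ a' b' →
      Obj P1 P2 P3 bbar abar a b ≤ Obj P1 P2 P3 bbar abar a' b') :
    (∀ i ∈ P1 ∪ P3, ∀ j ∈ P1 ∪ P3,
      (if i ∈ P1 then bbar i else b i) > (if j ∈ P1 then bbar j else b j) →
      a j ≤ a i) ∧
    (∀ i ∈ P2 ∪ P3, ∀ j ∈ P2 ∪ P3,
      (if i ∈ P2 then abar i else a i) > (if j ∈ P2 then abar j else a j) →
      b j ≤ b i) :=
  ordering_property_of_optimal_solutions_general P1 P2 P3 h13 h23 A B eX eQ bbar abar a b hfeas hopt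
end

section
/- Symmetrization on the common unknown coefficients preserves optimality: Let P3 be nonempty, let (a, b) be an optimal pair for the compressed-distance program, and set e_x' := ∑_{l∈P3} a_l² and e_q' := ∑_{l∈P3} b_l². Then the pair (a', b') that agrees with (a, b) on P1 and P2 and has constant entries a'_l = √(e_x'/|P3|) and b'_l = √(e_q'/|P3|) for all l ∈ P3 is feasible and also optimal. -/
open Finset Real

namespace CompressedDistance

variable {ι : Type*}

/-- Quadratic mean; it is `0` for empty `s`, since `x / 0 = 0`. -/
noncomputable def rms (s : Finset ι) (f : ι → ℝ) : ℝ :=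
  √((∑ m ∈ s, f m ^ 2) / s.card)

lemma card_mul_rms_sq (s : Finset ι) (f : ι → ℝ) :
    s.card * rms s f ^ 2 = ∑ m ∈ s, f m ^ 2 := by
  rw [rms, sq_sqrt (by positivity)]
  exact mul_div_cancel_of_imp' fun h => by simp [card_eq_zero.mp (Nat.cast_eq_zero.mp h)]

lemma card_mul_rms_mul_rms (s : Finset ι) (f g : ι → ℝ) :
    s.card * (rms s f * rms s g) = √(∑ m ∈ s, f m ^ 2) * √(∑ m ∈ s, g m ^ 2) := by
  have hn : (0 : ℝ) ≤ s.card := Nat.cast_nonneg _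
  rw [rms, rms, sqrt_div' _ hn, sqrt_div' _ hn, div_mul_div_comm, mul_self_sqrt hn]
  exact mul_div_cancel_of_imp' fun h => by simp [card_eq_zero.mp (Nat.cast_eq_zero.mp h)]

lemma rms_le {s : Finset ι} (hs : s.Nonempty) {f : ι → ℝ} {A : ℝ}
    (hf : ∀ l ∈ s, 0 ≤ f l ∧ f l ≤ A) : rms s f ≤ A := by
  obtain ⟨l, hl⟩ := hs
  have hA : 0 ≤ A := (hf l hl).1.trans (hf l hl).2
  have hsum : ∑ m ∈ s, f m ^ 2 ≤ s.card * A ^ 2 := by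
    simpa using sum_le_card_nsmul s (fun m => f m ^ 2) (A ^ 2) fun m hm =>
      pow_le_pow_left₀ (hf m hm).1 (hf m hm).2 2
  exact sqrt_le_iff.mpr ⟨hA, div_le_of_le_mul₀ (Nat.cast_nonneg _) (sq_nonneg A) (by linarith)⟩

variable [DecidableEq ι]

noncomputable def symmetrize (s : Finset ι) (f : ι → ℝ) (l : ι) : ℝ :=
  if l ∈ s then rms s f else f l

lemma symmetrize_of_mem {s : Finset ι} {l : ι} (hl : l ∈ s) (f : ι → ℝ) :
    symmetrize s f l = rms s f :=
  if_pos hl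

lemma symmetrize_of_notMem {s : Finset ι} {l : ι} (hl : l ∉ s) (f : ι → ℝ) :
    symmetrize s f l = f l :=
  if_neg hl

lemma sum_symmetrize_of_disjoint {s t : Finset ι} (hts : Disjoint t s) (f : ι → ℝ)
    (w : ι → ℝ → ℝ) : ∑ l ∈ t, w l (symmetrize s f l) = ∑ l ∈ t, w l (f l) :=
  sum_congr rfl fun _ hl => by rw [symmetrize_of_notMem (disjoint_left.mp hts hl)]

lemma sum_union_symmetrize_sq {s t : Finset ι} (hts : Disjoint t s) (f : ι → ℝ) :
    ∑ l ∈ t ∪ s, symmetrize s f l ^ 2 = ∑ l ∈ t ∪ s, f l ^ 2 := by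
  have hs : ∑ l ∈ s, symmetrize s f l ^ 2 = ∑ l ∈ s, f l ^ 2 := by
    rw [sum_congr rfl fun _ hl => by rw [symmetrize_of_mem hl], sum_const, nsmul_eq_mul,
      card_mul_rms_sq]
  rw [sum_union hts, sum_union hts, sum_symmetrize_of_disjoint hts f fun _ x => x ^ 2, hs]

lemma symmetrize_mem_bounds {s t : Finset ι} {f : ι → ℝ} {A : ℝ}
    (hf : ∀ l ∈ t ∪ s, 0 ≤ f l ∧ f l ≤ A) :
    ∀ l ∈ t ∪ s, 0 ≤ symmetrize s f l ∧ symmetrize s f l ≤ A := by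
  intro l hl
  by_cases hls : l ∈ s
  · rw [symmetrize_of_mem hls]
    exact ⟨sqrt_nonneg _, rms_le ⟨l, hls⟩ fun m hm => hf m (mem_union_right t hm)⟩
  · rw [symmetrize_of_notMem hls]
    exact hf l hl

lemma sum_symmetrize_mul_symmetrize (s : Finset ι) (f g : ι → ℝ) :
    ∑ l ∈ s, symmetrize s f l * symmetrize s g l =
      √(∑ m ∈ s, f m ^ 2) * √(∑ m ∈ s, g m ^ 2) := by
  rw [sum_congr rfl fun _ hl => by rw [symmetrize_of_mem hl, symmetrize_of_mem hl], sum_const,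
    nsmul_eq_mul, card_mul_rms_mul_rms]

variable {P1 P2 P3 : Finset ι}

lemma Feasible.symmetrize (h13 : Disjoint P1 P3) (h23 : Disjoint P2 P3) {A B eX eQ : ℝ}
    {a b : ι → ℝ} (h : Feasible P1 P2 P3 A B eX eQ a b) :
    Feasible P1 P2 P3 A B eX eQ (symmetrize P3 a) (symmetrize P3 b) := by
  obtain ⟨ha, hb, hsa, hsb⟩ := h
  exact ⟨symmetrize_mem_bounds ha, symmetrize_mem_bounds hb,
    (sum_union_symmetrize_sq h13 a).trans_le hsa, (sum_union_symmetrize_sq h23 b).trans_le hsb⟩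

lemma obj_symmetrize_le (h13 : Disjoint P1 P3) (h23 : Disjoint P2 P3) (bbar abar a b : ι → ℝ) :
    Obj P1 P2 P3 bbar abar (symmetrize P3 a) (symmetrize P3 b) ≤ Obj P1 P2 P3 bbar abar a b := by
  rw [Obj, Obj, sum_symmetrize_of_disjoint h13 a fun l x => x * bbar l,
    sum_symmetrize_of_disjoint h23 b fun l x => abar l * x, sum_symmetrize_mul_symmetrize]
  linarith [Real.sum_mul_le_sqrt_mul_sqrt P3 a b]

end CompressedDistance

open CompressedDistance in
theorem symmetrization_preserves_optimality_general {ι : Type*} [DecidableEq ι]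
    (P1 P2 P3 : Finset ι)
    (h13 : Disjoint P1 P3) (h23 : Disjoint P2 P3)
    (A B eX eQ : ℝ)
    (bbar abar : ι → ℝ)
    (a b : ι → ℝ)
    (hfeas : Feasible P1 P2 P3 A B eX eQ a b)
    (hopt : ∀ a' b' : ι → ℝ, Feasible P1 P2 P3 A B eX eQ a' b' →
      Obj P1 P2 P3 bbar abar a b ≤ Obj P1 P2 P3 bbar abar a' b') :
    Feasible P1 P2 P3 A B eX eQ
      (fun l => if l ∈ P3 then Real.sqrt ((∑ m ∈ P3, (a m) ^ 2) / P3.card) else a l)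
      (fun l => if l ∈ P3 then Real.sqrt ((∑ m ∈ P3, (b m) ^ 2) / P3.card) else b l) ∧
    (∀ a' b' : ι → ℝ, Feasible P1 P2 P3 A B eX eQ a' b' →
      Obj P1 P2 P3 bbar abar
        (fun l => if l ∈ P3 then Real.sqrt ((∑ m ∈ P3, (a m) ^ 2) / P3.card) else a l)
        (fun l => if l ∈ P3 then Real.sqrt ((∑ m ∈ P3, (b m) ^ 2) / P3.card) else b l)
        ≤ Obj P1 P2 P3 bbar abar a' b') :=
  ⟨hfeas.symmetrize h13 h23, fun a' b' h' =>
    (obj_symmetrize_le h13 h23 bbar abar a b).trans (hopt a' b' h')⟩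

/-- Symmetrization on the common unknown coefficients preserves optimality: replacing
the entries of an optimal pair on `P3` by the constants `√(eX'/|P3|)`, `√(eQ'/|P3|)`,
where `eX' = ∑_{l∈P3} a l ^ 2` and `eQ' = ∑_{l∈P3} b l ^ 2`, yields a feasible and
optimal pair. -/
theorem symmetrization_preserves_optimality {ι : Type*} [DecidableEq ι]
    (P1 P2 P3 : Finset ι) (hP3 : P3.Nonempty)
    (h12 : Disjoint P1 P2) (h13 : Disjoint P1 P3) (h23 : Disjoint P2 P3)
    (A B eX eQ : ℝ) (hA : 0 < A) (hB : 0 < B) (heX : 0 ≤ eX) (heQ : 0 ≤ eQ)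
    (bbar abar : ι → ℝ)
    (hbbar : ∀ l ∈ P1, B ≤ bbar l) (habar : ∀ l ∈ P2, A ≤ abar l)
    (a b : ι → ℝ)
    (hfeas : Feasible P1 P2 P3 A B eX eQ a b)
    (hopt : ∀ a' b' : ι → ℝ, Feasible P1 P2 P3 A B eX eQ a' b' →
      Obj P1 P2 P3 bbar abar a b ≤ Obj P1 P2 P3 bbar abar a' b') :
    Feasible P1 P2 P3 A B eX eQ
      (fun l => if l ∈ P3 then Real.sqrt ((∑ m ∈ P3, (a m) ^ 2) / P3.card) else a l)
      (fun l => if l ∈ P3 then Real.sqrt ((∑ m ∈ P3, (b m) ^ 2) / P3.card) else b l) ∧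
    (∀ a' b' : ι → ℝ, Feasible P1 P2 P3 A B eX eQ a' b' →
      Obj P1 P2 P3 bbar abar
        (fun l => if l ∈ P3 then Real.sqrt ((∑ m ∈ P3, (a m) ^ 2) / P3.card) else a l)
        (fun l => if l ∈ P3 then Real.sqrt ((∑ m ∈ P3, (b m) ^ 2) / P3.card) else b l)
        ≤ Obj P1 P2 P3 bbar abar a' b') :=
  symmetrization_preserves_optimality_general P1 P2 P3 h13 h23 A B eX eQ bbar abar a b hfeas hopt
end

section
/- Global optimality of the decoupled solution when the energies fit outside the common unknowns: Assume in the compressed-distance program that e_x ≤ |P1|·A² and e_q ≤ |P2|·B². Then the minimum of F over all feasible pairs equals m_a + m_b, where m_a is the minimum of a ↦ −∑_{l∈P1} a_l·b̄_l over {a : P1 → ℝ | 0 ≤ a_l ≤ A for all l ∈ P1 and ∑_{l∈P1} a_l² ≤ e_x} and m_b is the minimum of b ↦ −∑_{l∈P2} ā_l·b_l over {b : P2 → ℝ | 0 ≤ b_l ≤ B for all l ∈ P2 and ∑_{l∈P2} b_l² ≤ e_q}; moreover, the minimum of F is attained by a feasible pair whose entries on P3 are all zero. -/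
open Finset

lemma mul_le_weighted_add_sq {A B : ℝ} (hA : 0 < A) (hB : 0 < B) (s t : ℝ) :
    s * t ≤ B / (2 * A) * s ^ 2 + A / (2 * B) * t ^ 2 := by
  have hgap : B / (2 * A) * s ^ 2 + A / (2 * B) * t ^ 2 - s * t =
      (B * s - A * t) ^ 2 / (2 * A * B) := by
    field_simp
    ring
  have : 0 ≤ (B * s - A * t) ^ 2 / (2 * A * B) := by positivity
  linarith

lemma sq_sub_sq_le_two_mul_mul_sub {x y A : ℝ} (hxy : x ≤ y) (hyA : y ≤ A) :
    y ^ 2 - x ^ 2 ≤ 2 * A * (y - x) := by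
  nlinarith

section

variable {ι : Type*}

/-- The objective values of the decoupled problem whose minimum is `m_a` (or `m_b`). -/
def decoupledValues (s : Finset ι) (C e : ℝ) (w : ι → ℝ) : Set ℝ :=
  {v | ∃ x : ι → ℝ, (∀ l ∈ s, 0 ≤ x l ∧ x l ≤ C) ∧ ∑ l ∈ s, x l ^ 2 ≤ e ∧
    v = -∑ l ∈ s, x l * w l}

/-- The witness raises every coordinate by the same fraction `E / ∑ (A² - x_l²)` of its room
`A² - x_l²`. -/
lemma exists_le_cap_sum_sq_eq_add {s : Finset ι} {x : ι → ℝ} {A E : ℝ}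
    (hx : ∀ l ∈ s, 0 ≤ x l ∧ x l ≤ A) (hE : 0 ≤ E)
    (hES : E ≤ ∑ l ∈ s, (A ^ 2 - x l ^ 2)) :
    ∃ y : ι → ℝ, (∀ l ∈ s, x l ≤ y l ∧ y l ≤ A) ∧
      ∑ l ∈ s, y l ^ 2 = ∑ l ∈ s, x l ^ 2 + E := by
  set S := ∑ l ∈ s, (A ^ 2 - x l ^ 2)
  have hroom : ∀ l ∈ s, 0 ≤ A ^ 2 - x l ^ 2 := fun l hl => by
    nlinarith [hx l hl]
  have ht : 0 ≤ E / S ∧ E / S ≤ 1 :=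
    ⟨div_nonneg hE (hE.trans hES), div_le_one_of_le₀ hES (hE.trans hES)⟩
  have hsq : ∀ l ∈ s, 0 ≤ x l ^ 2 + (A ^ 2 - x l ^ 2) * (E / S) := fun l hl =>
    add_nonneg (sq_nonneg _) (mul_nonneg (hroom l hl) ht.1)
  refine ⟨fun l => √(x l ^ 2 + (A ^ 2 - x l ^ 2) * (E / S)), fun l hl => ⟨?_, ?_⟩, ?_⟩
  · rw [Real.le_sqrt (hx l hl).1 (hsq l hl)]
    nlinarith [mul_nonneg (hroom l hl) ht.1]
  · rw [Real.sqrt_le_left ((hx l hl).1.trans (hx l hl).2)]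
    nlinarith [mul_le_mul_of_nonneg_left ht.2 (hroom l hl)]
  · have hSE : S * (E / S) = E := by
      rw [← mul_div_assoc]
      exact mul_div_cancel_left_of_imp fun hS => le_antisymm (hS ▸ hES) hE
    rw [sum_congr rfl fun l hl => Real.sq_sqrt (hsq l hl), sum_add_distrib, ← sum_mul, hSE]

lemma indicator_mem_Icc {s : Finset ι} {x : ι → ℝ} {C : ℝ} (hC : 0 ≤ C)
    (hx : ∀ l ∈ s, 0 ≤ x l ∧ x l ≤ C) (l : ι) :
    0 ≤ (s : Set ι).indicator x l ∧ (s : Set ι).indicator x l ≤ C := by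
  by_cases hl : l ∈ s
  · rw [Set.indicator_of_mem (mem_coe.2 hl)]
    exact hx l hl
  · rw [Set.indicator_of_notMem (mem_coe.not.2 hl)]
    exact ⟨le_rfl, hC⟩

variable {P1 P2 P3 : Finset ι} {A B eX eQ : ℝ} {bbar abar : ι → ℝ}

lemma obj_indicator (h13 : Disjoint P1 P3) (a b : ι → ℝ) :
    Obj P1 P2 P3 bbar abar ((P1 : Set ι).indicator a) ((P2 : Set ι).indicator b) =
      -∑ l ∈ P1, a l * bbar l + -∑ l ∈ P2, abar l * b l := by
  have h1 : ∑ l ∈ P1, (P1 : Set ι).indicator a l * bbar l = ∑ l ∈ P1, a l * bbar l :=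
    sum_congr rfl fun l hl => by rw [Set.indicator_of_mem (mem_coe.2 hl)]
  have h2 : ∑ l ∈ P2, abar l * (P2 : Set ι).indicator b l = ∑ l ∈ P2, abar l * b l :=
    sum_congr rfl fun l hl => by rw [Set.indicator_of_mem (mem_coe.2 hl)]
  have h3 : ∑ l ∈ P3, (P1 : Set ι).indicator a l * (P2 : Set ι).indicator b l = 0 :=
    sum_eq_zero fun l hl => by
      rw [Set.indicator_of_notMem (mem_coe.not.2 (disjoint_right.1 h13 hl)), zero_mul]
  rw [Obj, h1, h2, h3]
  ring

variable [DecidableEq ι]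

lemma sum_union_indicator_of_disjoint {s t : Finset ι} (hst : Disjoint s t) {g : ℝ → ℝ}
    (hg : g 0 = 0) (x : ι → ℝ) :
    ∑ l ∈ s ∪ t, g ((s : Set ι).indicator x l) = ∑ l ∈ s, g (x l) := by
  rw [sum_union hst, sum_eq_zero (s := t) fun l hl => by
    rw [Set.indicator_of_notMem (mem_coe.not.2 (disjoint_right.1 hst hl)), hg], add_zero]
  exact sum_congr rfl fun l hl => by rw [Set.indicator_of_mem (mem_coe.2 hl)]

lemma le_neg_sum_mul_sub_of_mem_lowerBounds {s t : Finset ι} (hst : Disjoint s t)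
    {A B e m : ℝ} (hA : 0 < A) (hB : 0 ≤ B) {w : ι → ℝ} (hw : ∀ l ∈ s, B ≤ w l)
    (hfit : e ≤ s.card * A ^ 2) (hm : m ∈ lowerBounds (decoupledValues s A e w))
    {x : ι → ℝ} (hx : ∀ l ∈ s ∪ t, 0 ≤ x l ∧ x l ≤ A) (hxe : ∑ l ∈ s ∪ t, x l ^ 2 ≤ e) :
    m ≤ -∑ l ∈ s, x l * w l - B / (2 * A) * ∑ l ∈ t, x l ^ 2 := by
  have hxs : ∀ l ∈ s, 0 ≤ x l ∧ x l ≤ A := fun l hl => hx l (mem_union_left t hl)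
  set E := ∑ l ∈ t, x l ^ 2
  rw [sum_union hst] at hxe
  have hroom : E ≤ ∑ l ∈ s, (A ^ 2 - x l ^ 2) := by
    rw [sum_sub_distrib, sum_const, nsmul_eq_mul]
    linarith
  obtain ⟨y, hy, hysq⟩ := exists_le_cap_sum_sq_eq_add hxs (sum_nonneg fun l _ => sq_nonneg _) hroom
  have hmy : m ≤ -∑ l ∈ s, y l * w l :=
    hm ⟨y, fun l hl => ⟨(hxs l hl).1.trans (hy l hl).1, (hy l hl).2⟩, by linarith, rfl⟩
  have hgain : B / (2 * A) * E ≤ ∑ l ∈ s, (y l - x l) * w l :=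
    calc B / (2 * A) * E = B / (2 * A) * ∑ l ∈ s, (y l ^ 2 - x l ^ 2) := by
          rw [sum_sub_distrib, hysq, add_sub_cancel_left]
      _ ≤ B / (2 * A) * ∑ l ∈ s, 2 * A * (y l - x l) := by
          gcongr with l hl
          exact sq_sub_sq_le_two_mul_mul_sub (hy l hl).1 (hy l hl).2
      _ = ∑ l ∈ s, (y l - x l) * B := by
          rw [mul_sum]
          exact sum_congr rfl fun l _ => by field_simp
      _ ≤ ∑ l ∈ s, (y l - x l) * w l :=
          sum_le_sum fun l hl => mul_le_mul_of_nonneg_left (hw l hl) (sub_nonneg.2 (hy l hl).1)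
  simp only [sub_mul, sum_sub_distrib] at hgain
  linarith

lemma add_le_obj_of_feasible (h13 : Disjoint P1 P3) (h23 : Disjoint P2 P3)
    (hA : 0 < A) (hB : 0 < B) (hbbar : ∀ l ∈ P1, B ≤ bbar l) (habar : ∀ l ∈ P2, A ≤ abar l)
    (hfitX : eX ≤ P1.card * A ^ 2) (hfitQ : eQ ≤ P2.card * B ^ 2) {ma mb : ℝ}
    (hma : ma ∈ lowerBounds (decoupledValues P1 A eX bbar))
    (hmb : mb ∈ lowerBounds (decoupledValues P2 B eQ abar))
    {a b : ι → ℝ} (hab : Feasible P1 P2 P3 A B eX eQ a b) :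
    ma + mb ≤ Obj P1 P2 P3 bbar abar a b := by
  obtain ⟨ha, hb, hae, hbe⟩ := hab
  have hma' := le_neg_sum_mul_sub_of_mem_lowerBounds h13 hA hB.le hbbar hfitX hma ha hae
  have hmb' := le_neg_sum_mul_sub_of_mem_lowerBounds h23 hB hA.le habar hfitQ hmb hb hbe
  have hcouple : ∑ l ∈ P3, a l * b l ≤
      B / (2 * A) * ∑ l ∈ P3, a l ^ 2 + A / (2 * B) * ∑ l ∈ P3, b l ^ 2 := by
    rw [mul_sum, mul_sum, ← sum_add_distrib]
    exact sum_le_sum fun l _ => mul_le_weighted_add_sq hA hB (a l) (b l)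
  simp only [mul_comm (b _)] at hmb'
  rw [Obj]
  linarith

lemma feasible_indicator (h13 : Disjoint P1 P3) (h23 : Disjoint P2 P3) (hA : 0 ≤ A)
    (hB : 0 ≤ B) {a b : ι → ℝ} (ha : ∀ l ∈ P1, 0 ≤ a l ∧ a l ≤ A)
    (hae : ∑ l ∈ P1, a l ^ 2 ≤ eX) (hb : ∀ l ∈ P2, 0 ≤ b l ∧ b l ≤ B)
    (hbe : ∑ l ∈ P2, b l ^ 2 ≤ eQ) :
    Feasible P1 P2 P3 A B eX eQ ((P1 : Set ι).indicator a) ((P2 : Set ι).indicator b) := by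
  refine ⟨fun l _ => indicator_mem_Icc hA ha l, fun l _ => indicator_mem_Icc hB hb l, ?_, ?_⟩
  · rwa [sum_union_indicator_of_disjoint h13 (g := (· ^ 2)) (zero_pow two_ne_zero)]
  · rwa [sum_union_indicator_of_disjoint h23 (g := (· ^ 2)) (zero_pow two_ne_zero)]

end

theorem decoupled_solution_globally_optimal_general {ι : Type*} [DecidableEq ι]
    (P1 P2 P3 : Finset ι)
    (h13 : Disjoint P1 P3) (h23 : Disjoint P2 P3)
    (A B eX eQ : ℝ) (hA : 0 < A) (hB : 0 < B)
    (bbar abar : ι → ℝ)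
    (hbbar : ∀ l ∈ P1, B ≤ bbar l) (habar : ∀ l ∈ P2, A ≤ abar l)
    (hfitX : eX ≤ (P1.card : ℝ) * A ^ 2) (hfitQ : eQ ≤ (P2.card : ℝ) * B ^ 2)
    (ma mb : ℝ)
    (hma : IsLeast {v : ℝ | ∃ a : ι → ℝ, (∀ l ∈ P1, 0 ≤ a l ∧ a l ≤ A) ∧
      (∑ l ∈ P1, (a l) ^ 2) ≤ eX ∧ v = -∑ l ∈ P1, a l * bbar l} ma)
    (hmb : IsLeast {v : ℝ | ∃ b : ι → ℝ, (∀ l ∈ P2, 0 ≤ b l ∧ b l ≤ B) ∧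
      (∑ l ∈ P2, (b l) ^ 2) ≤ eQ ∧ v = -∑ l ∈ P2, abar l * b l} mb) :
    IsLeast {v : ℝ | ∃ a b : ι → ℝ, Feasible P1 P2 P3 A B eX eQ a b ∧
      v = Obj P1 P2 P3 bbar abar a b} (ma + mb) ∧
    ∃ a b : ι → ℝ, Feasible P1 P2 P3 A B eX eQ a b ∧
      (∀ l ∈ P3, a l = 0 ∧ b l = 0) ∧
      Obj P1 P2 P3 bbar abar a b = ma + mb := by
  have hmb_le : mb ∈ lowerBounds (decoupledValues P2 B eQ abar) := by
    simpa only [decoupledValues, mul_comm (abar _)] using hmb.2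
  obtain ⟨⟨a, ha, hae, rfl⟩, hma_le⟩ := hma
  obtain ⟨⟨b, hb, hbe, rfl⟩, -⟩ := hmb
  have hfeas := feasible_indicator h13 h23 hA.le hB.le ha hae hb hbe
  have hobj := obj_indicator (P2 := P2) (bbar := bbar) (abar := abar) h13 a b
  refine ⟨⟨⟨_, _, hfeas, hobj.symm⟩, ?_⟩, _, _, hfeas, fun l hl => ⟨?_, ?_⟩, hobj⟩
  · rintro v ⟨a', b', hab, rfl⟩
    exact add_le_obj_of_feasible h13 h23 hA hB hbbar habar hfitX hfitQ hma_le hmb_le hab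
  · exact Set.indicator_of_notMem (mem_coe.not.2 (disjoint_right.1 h13 hl)) a
  · exact Set.indicator_of_notMem (mem_coe.not.2 (disjoint_right.1 h23 hl)) b

/-- Global optimality of the decoupled solution when the energy budgets fit outside
the common unknown coefficients (`eX ≤ |P1|·A²` and `eQ ≤ |P2|·B²`): the minimum of
the objective equals `ma + mb`, the sum of the minima of the two decoupled problems,
and it is attained by a feasible pair vanishing on `P3`. -/
theorem decoupled_solution_globally_optimal {ι : Type*} [DecidableEq ι]
    (P1 P2 P3 : Finset ι)
    (h12 : Disjoint P1 P2) (h13 : Disjoint P1 P3) (h23 : Disjoint P2 P3)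
    (A B eX eQ : ℝ) (hA : 0 < A) (hB : 0 < B) (heX : 0 ≤ eX) (heQ : 0 ≤ eQ)
    (bbar abar : ι → ℝ)
    (hbbar : ∀ l ∈ P1, B ≤ bbar l) (habar : ∀ l ∈ P2, A ≤ abar l)
    (hfitX : eX ≤ (P1.card : ℝ) * A ^ 2) (hfitQ : eQ ≤ (P2.card : ℝ) * B ^ 2)
    (ma mb : ℝ)
    (hma : IsLeast {v : ℝ | ∃ a : ι → ℝ, (∀ l ∈ P1, 0 ≤ a l ∧ a l ≤ A) ∧
      (∑ l ∈ P1, (a l) ^ 2) ≤ eX ∧ v = -∑ l ∈ P1, a l * bbar l} ma)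
    (hmb : IsLeast {v : ℝ | ∃ b : ι → ℝ, (∀ l ∈ P2, 0 ≤ b l ∧ b l ≤ B) ∧
      (∑ l ∈ P2, (b l) ^ 2) ≤ eQ ∧ v = -∑ l ∈ P2, abar l * b l} mb) :
    IsLeast {v : ℝ | ∃ a b : ι → ℝ, Feasible P1 P2 P3 A B eX eQ a b ∧
      v = Obj P1 P2 P3 bbar abar a b} (ma + mb) ∧
    ∃ a b : ι → ℝ, Feasible P1 P2 P3 A B eX eQ a b ∧
      (∀ l ∈ P3, a l = 0 ∧ b l = 0) ∧
      Obj P1 P2 P3 bbar abar a b = ma + mb :=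
  decoupled_solution_globally_optimal_general P1 P2 P3 h13 h23 A B eX eQ hA hB bbar abar hbbar habar
    hfitX hfitQ ma mb hma hmb
end

section
/- Existence and uniqueness of the positive fixed point of the energy-allocation map: Let P1 and P2 be finite index sets, let A, B > 0, let b̄ : P1 → ℝ satisfy b̄_l ≥ B for all l ∈ P1, let ā : P2 → ℝ satisfy ā_l ≥ A for all l ∈ P2, and let e_x, e_q > 0. Assume that e_x > |P1|·A² or e_q > |P2|·B² (or both). Then there exists a unique pair (e_x', e_q') with e_x' > 0 and e_q' > 0 satisfying the nonlinear system e_x' = e_x − ∑_{l∈P1} min(b̄_l²·(e_x'/e_q'), A²) and e_q' = e_q − ∑_{l∈P2} min(ā_l²·(e_q'/e_x'), B²). -/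
/-!
A positive fixed point `(x, y)` is determined by its ratio `r = x / y`: writing
`f r = eX - ∑ min (b̄² r, A²)` and `g r = eQ - ∑ min (ā² / r, B²)`, the fixed points are exactly the
pairs `(f r, g r)` with `f r = r * g r` and `g r > 0`. Since `f` is antitone and `g` is monotone,
a root `r` with `g r > 0` and any `s > r` give `f s ≤ r g r < s g r ≤ s g s`, so there is at most
one such root. The function `f r - r g r` is continuous on `r > 0`, nonnegative for small `r`
and nonpositive for large `r`, which gives a root by the intermediate value theorem. The hypothesis `eX > |P1| A²` (resp. `eQ > |P2| B²`)
makes `f` (resp. `g`) positive everywhere, so `g > 0` at that root.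
-/

open Finset Set

/-- With `r = x₁ / x₂`, the two components of the energy-allocation map are
`clippedResidual P1 b̄ A e_x r` and `clippedResidual P2 ā B e_q r⁻¹`. -/
noncomputable def clippedResidual {ι : Type*} (P : Finset ι) (c : ι → ℝ) (M e r : ℝ) : ℝ :=
  e - ∑ l ∈ P, min (c l ^ 2 * r) (M ^ 2)

namespace clippedResidual

variable {ι : Type*} (P : Finset ι) (c : ι → ℝ) (M e : ℝ)

theorem antitone : Antitone (clippedResidual P c M e) := fun _ _ hrs =>
  sub_le_sub_left (sum_le_sum fun _ _ =>
    min_le_min_right _ (mul_le_mul_of_nonneg_left hrs (sq_nonneg _))) e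

theorem monotoneOn_inv : MonotoneOn (fun r => clippedResidual P c M e r⁻¹) (Ioi 0) :=
  (antitone P c M e).comp_antitoneOn inv_antitoneOn_Ioi

theorem continuous : Continuous (clippedResidual P c M e) := by
  unfold clippedResidual
  fun_prop

theorem sub_card_mul_le (r : ℝ) : e - P.card * M ^ 2 ≤ clippedResidual P c M e r := by
  have : ∑ l ∈ P, min (c l ^ 2 * r) (M ^ 2) ≤ P.card * M ^ 2 :=
    (sum_le_sum fun _ _ => min_le_right _ _).trans_eq (by rw [sum_const, nsmul_eq_mul])
  unfold clippedResidual
  linarith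

theorem sub_mul_le (r : ℝ) : e - (∑ l ∈ P, c l ^ 2) * r ≤ clippedResidual P c M e r := by
  have : ∑ l ∈ P, min (c l ^ 2 * r) (M ^ 2) ≤ (∑ l ∈ P, c l ^ 2) * r := by
    rw [sum_mul]
    exact sum_le_sum fun l _ => min_le_left _ _
  unfold clippedResidual
  linarith

theorem le_self {r : ℝ} (hr : 0 ≤ r) : clippedResidual P c M e r ≤ e :=
  sub_le_self e (sum_nonneg fun _ _ => le_min (by positivity) (sq_nonneg M))

end clippedResidual

theorem eq_of_eq_mul_of_eq_mul {f g : ℝ → ℝ} (hf : AntitoneOn f (Ioi 0))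
    (hg : MonotoneOn g (Ioi 0)) {r s : ℝ} (hr : 0 < r) (hs : 0 < s)
    (hfr : f r = r * g r) (hfs : f s = s * g s) (hgr : 0 < g r) (hgs : 0 < g s) : r = s := by
  have key : ∀ {r s : ℝ}, 0 < r → r < s → f r = r * g r → 0 < g r → f s < s * g s :=
    fun {r s} hr hrs hfr hgr =>
    calc f s ≤ f r := hf hr (hr.trans hrs) hrs.le
      _ = r * g r := hfr
      _ < s * g r := mul_lt_mul_of_pos_right hrs hgr
      _ ≤ s * g s := mul_le_mul_of_nonneg_left (hg hr (hr.trans hrs) hrs.le) (hr.trans hrs).le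
  rcases lt_trichotomy r s with h | h | h
  · exact absurd hfs (key hr h hfr hgr).ne
  · exact h
  · exact absurd hfr (key hs h hfs hgs).ne

theorem existsUnique_pos_fixedPoint_of_eq_mul {f g : ℝ → ℝ} (hf : AntitoneOn f (Ioi 0))
    (hg : MonotoneOn g (Ioi 0)) {r : ℝ} (hr : 0 < r) (hroot : f r = r * g r) (hgr : 0 < g r) :
    ∃! p : ℝ × ℝ, 0 < p.1 ∧ 0 < p.2 ∧ p.1 = f (p.1 / p.2) ∧ p.2 = g (p.1 / p.2) := by
  have hratio : f r / g r = r := by rw [hroot, mul_div_cancel_right₀ _ hgr.ne']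
  refine ⟨(f r, g r), ⟨hroot ▸ mul_pos hr hgr, hgr, by rw [hratio], by rw [hratio]⟩, ?_⟩
  rintro ⟨x, y⟩ ⟨hx, hy, hxeq, hyeq⟩
  have hxy : x / y = r := eq_of_eq_mul_of_eq_mul hf hg (div_pos hx hy) hr
    (by rw [← hxeq, ← hyeq, div_mul_cancel₀ _ hy.ne']) hroot (hyeq ▸ hy) hgr
  rw [hxy] at hxeq hyeq
  exact Prod.ext hxeq hyeq

theorem exists_clippedResidual_eq_mul_clippedResidual_inv {ι : Type*} (P Q : Finset ι)
    (b a : ι → ℝ) (A B : ℝ) {eX eQ : ℝ} (heX : 0 < eX) (heQ : 0 < eQ) :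
    ∃ r, 0 < r ∧ clippedResidual P b A eX r = r * clippedResidual Q a B eQ r⁻¹ := by
  set f := clippedResidual P b A eX
  set g := fun r : ℝ => clippedResidual Q a B eQ r⁻¹
  set SP := ∑ l ∈ P, b l ^ 2
  set SQ := ∑ l ∈ Q, a l ^ 2
  have hSP : 0 ≤ SP := sum_nonneg fun _ _ => sq_nonneg _
  have hSQ : 0 ≤ SQ := sum_nonneg fun _ _ => sq_nonneg _
  -- `eX - (SP + eQ) r ≤ f r - r g r ≤ eX + SQ - eQ r` on `r > 0`
  set r₁ := eX / (SP + eQ)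
  set r₂ := (eX + SQ) / eQ
  have hr₁ : 0 < r₁ := by positivity
  have hr₁₂ : r₁ ≤ r₂ :=
    (div_le_div_of_nonneg_left heX.le heQ (le_add_of_nonneg_left hSP)).trans
      (div_le_div_of_nonneg_right (le_add_of_nonneg_right hSQ) heQ.le)
  have hcont : ContinuousOn (fun r => f r - r * g r) (Icc r₁ r₂) := by
    have hg : ContinuousOn g (Icc r₁ r₂) :=
      (clippedResidual.continuous Q a B eQ).comp_continuousOn
        (continuousOn_inv₀.mono fun r hr => (hr₁.trans_le hr.1).ne')
    exact (clippedResidual.continuous P b A eX).continuousOn.sub (continuousOn_id.mul hg)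
  have hpos : 0 ≤ f r₁ - r₁ * g r₁ := by
    have h₁ := clippedResidual.sub_mul_le P b A eX r₁
    have h₂ := mul_le_mul_of_nonneg_left
      (clippedResidual.le_self Q a B eQ (inv_nonneg.2 hr₁.le)) hr₁.le
    have h₃ : (SP + eQ) * r₁ = eX := mul_div_cancel₀ _ (by positivity)
    linarith
  have hneg : f r₂ - r₂ * g r₂ ≤ 0 := by
    have hr₂ : 0 < r₂ := hr₁.trans_le hr₁₂
    have h₁ := clippedResidual.le_self P b A eX hr₂.le
    have h₂ := mul_le_mul_of_nonneg_left (clippedResidual.sub_mul_le Q a B eQ r₂⁻¹) hr₂.le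
    have h₃ : r₂ * eQ = eX + SQ := div_mul_cancel₀ _ heQ.ne'
    rw [mul_sub, mul_left_comm, mul_inv_cancel₀ hr₂.ne', mul_one] at h₂
    linarith
  obtain ⟨r, hr, hroot⟩ := intermediate_value_Icc' hr₁₂ hcont ⟨hneg, hpos⟩
  exact ⟨r, hr₁.trans_le hr.1, sub_eq_zero.1 hroot⟩

theorem energy_allocation_unique_fixed_point_general {ι : Type*} (P1 P2 : Finset ι)
    (A B : ℝ)
    (bbar abar : ι → ℝ)
    (eX eQ : ℝ) (heX : 0 < eX) (heQ : 0 < eQ)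
    (hbig : (P1.card : ℝ) * A ^ 2 < eX ∨ (P2.card : ℝ) * B ^ 2 < eQ) :
    ∃! p : ℝ × ℝ, 0 < p.1 ∧ 0 < p.2 ∧
      p.1 = eX - ∑ l ∈ P1, min ((bbar l) ^ 2 * (p.1 / p.2)) (A ^ 2) ∧
      p.2 = eQ - ∑ l ∈ P2, min ((abar l) ^ 2 * (p.2 / p.1)) (B ^ 2) := by
  obtain ⟨r, hr, hroot⟩ :=
    exists_clippedResidual_eq_mul_clippedResidual_inv P1 P2 bbar abar A B heX heQ
  have hgr : 0 < clippedResidual P2 abar B eQ r⁻¹ := by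
    rcases hbig with hX | hQ
    · have hfr := (sub_pos.2 hX).trans_le (clippedResidual.sub_card_mul_le P1 bbar A eX r)
      exact pos_of_mul_pos_right (hroot ▸ hfr) hr.le
    · exact (sub_pos.2 hQ).trans_le (clippedResidual.sub_card_mul_le P2 abar B eQ r⁻¹)
  refine (existsUnique_congr fun p => ?_).1 <|
    existsUnique_pos_fixedPoint_of_eq_mul ((clippedResidual.antitone P1 bbar A eX).antitoneOn _)
      (clippedResidual.monotoneOn_inv P2 abar B eQ) hr hroot hgr
  simp only [inv_div]
  rfl

/-- Existence and uniqueness of the positive fixed point of the energy-allocation map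
in the double-waterfilling algorithm: if `eX > |P1|·A²` or `eQ > |P2|·B²`, then there
is a unique pair `(eX', eQ')` of positive residual energies satisfying the nonlinear
system. -/
theorem energy_allocation_unique_fixed_point {ι : Type*} (P1 P2 : Finset ι)
    (A B : ℝ) (hA : 0 < A) (hB : 0 < B)
    (bbar abar : ι → ℝ)
    (hbbar : ∀ l ∈ P1, B ≤ bbar l) (habar : ∀ l ∈ P2, A ≤ abar l)
    (eX eQ : ℝ) (heX : 0 < eX) (heQ : 0 < eQ)
    (hbig : (P1.card : ℝ) * A ^ 2 < eX ∨ (P2.card : ℝ) * B ^ 2 < eQ) :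
    ∃! p : ℝ × ℝ, 0 < p.1 ∧ 0 < p.2 ∧
      p.1 = eX - ∑ l ∈ P1, min ((bbar l) ^ 2 * (p.1 / p.2)) (A ^ 2) ∧
      p.2 = eQ - ∑ l ∈ P2, min ((abar l) ^ 2 * (p.2 / p.1)) (B ^ 2) :=
  energy_allocation_unique_fixed_point_general P1 P2 A B bbar abar eX eQ heX heQ hbig
end

section
/- Strict monotonicity of the ratio function in the fixed-point computation: Let P1 and P2 be finite index sets, A, B > 0, b̄ : P1 → ℝ with b̄_l ≥ B for all l ∈ P1, ā : P2 → ℝ with ā_l ≥ A for all l ∈ P2, and e_x, e_q > 0. Define N(γ) := e_x − ∑_{l∈P1} min(b̄_l²·γ, A²) and D(γ) := e_q − ∑_{l∈P2} min(ā_l²/γ, B²) for γ > 0, and let S := {γ > 0 | D(γ) > 0 and N(γ) ≥ 0}. Then the function h(γ) := γ − N(γ)/D(γ) is continuous and strictly increasing on S. -/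
/-!
The numerator `N` is antitone in `γ` and the denominator `D` is monotone on `γ > 0`; on `S`, where
`N ≥ 0` and `D > 0`, the quotient `N / D` is therefore antitone, and `γ` minus an antitone function
is strictly increasing. Continuity holds because every summand is continuous away from `γ = 0` and
`D` does not vanish on `S`.
-/

open Finset Set

section

variable {𝕜 : Type*} [Field 𝕜] [LinearOrder 𝕜] [IsStrictOrderedRing 𝕜]

theorem AntitoneOn.div_of_monotoneOn {α : Type*} [Preorder α] {f g : α → 𝕜} {s : Set α}
    (hf : AntitoneOn f s) (hg : MonotoneOn g s) (hf₀ : ∀ x ∈ s, 0 ≤ f x)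
    (hg₀ : ∀ x ∈ s, 0 < g x) : AntitoneOn (fun x => f x / g x) s :=
  fun _ hx _ hy hxy => div_le_div₀ (hf₀ _ hx) (hf hx hy hxy) (hg₀ _ hx) (hg hx hy hxy)

theorem strictMonoOn_sub_div {f g : 𝕜 → 𝕜} {s : Set 𝕜}
    (hf : AntitoneOn f s) (hg : MonotoneOn g s) (hf₀ : ∀ x ∈ s, 0 ≤ f x)
    (hg₀ : ∀ x ∈ s, 0 < g x) : StrictMonoOn (fun x => x - f x / g x) s := by
  simpa only [sub_eq_add_neg, id] using
    strictMonoOn_id.add_monotone (hf.div_of_monotoneOn hg hf₀ hg₀).neg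

variable {ι : Type*} (s : Finset ι) (c K : ι → 𝕜) (e : 𝕜)

theorem antitone_sub_sum_min_mul (hc : ∀ l ∈ s, 0 ≤ c l) :
    Antitone fun γ : 𝕜 => e - ∑ l ∈ s, min (c l * γ) (K l) :=
  fun _ _ hγ => sub_le_sub_left
    (sum_le_sum fun l hl => min_le_min_right _ (mul_le_mul_of_nonneg_left hγ (hc l hl))) e

theorem monotoneOn_sub_sum_min_div (hc : ∀ l ∈ s, 0 ≤ c l) :
    MonotoneOn (fun γ : 𝕜 => e - ∑ l ∈ s, min (c l / γ) (K l)) (Ioi 0) :=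
  fun _ hγ _ _ hγγ' => sub_le_sub_left
    (sum_le_sum fun l hl => min_le_min_right _ (div_le_div_of_nonneg_left (hc l hl) hγ hγγ')) e

end

theorem ratio_function_continuous_strict_mono_general {ι : Type*} (P1 P2 : Finset ι)
    (A B : ℝ)
    (bbar abar : ι → ℝ)
    (eX eQ : ℝ) :
    ContinuousOn
      (fun γ : ℝ => γ -
        (eX - ∑ l ∈ P1, min ((bbar l) ^ 2 * γ) (A ^ 2)) /
        (eQ - ∑ l ∈ P2, min ((abar l) ^ 2 / γ) (B ^ 2)))
      {γ : ℝ | 0 < γ ∧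
        0 < eQ - ∑ l ∈ P2, min ((abar l) ^ 2 / γ) (B ^ 2) ∧
        0 ≤ eX - ∑ l ∈ P1, min ((bbar l) ^ 2 * γ) (A ^ 2)} ∧
    StrictMonoOn
      (fun γ : ℝ => γ -
        (eX - ∑ l ∈ P1, min ((bbar l) ^ 2 * γ) (A ^ 2)) /
        (eQ - ∑ l ∈ P2, min ((abar l) ^ 2 / γ) (B ^ 2)))
      {γ : ℝ | 0 < γ ∧
        0 < eQ - ∑ l ∈ P2, min ((abar l) ^ 2 / γ) (B ^ 2) ∧
        0 ≤ eX - ∑ l ∈ P1, min ((bbar l) ^ 2 * γ) (A ^ 2)} := by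
  refine ⟨continuousOn_of_forall_continuousAt fun γ ⟨hγ, hD, _⟩ => ?_, ?_⟩
  · have hγ₀ := hγ.ne'
    have hD₀ := hD.ne'
    fun_prop (disch := assumption)
  · have hN := antitone_sub_sum_min_mul P1 (fun l => bbar l ^ 2) (fun _ => A ^ 2) eX
      fun l _ => sq_nonneg (bbar l)
    have hD := monotoneOn_sub_sum_min_div P2 (fun l => abar l ^ 2) (fun _ => B ^ 2) eQ
      fun l _ => sq_nonneg (abar l)
    exact strictMonoOn_sub_div (hN.antitoneOn _) (hD.mono fun _ hγ => hγ.1)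
      (fun _ hγ => hγ.2.2) (fun _ hγ => hγ.2.1)

/-- Strict monotonicity and continuity of the ratio function
`h(γ) = γ - N(γ)/D(γ)` on the set `S = {γ > 0 | D(γ) > 0, N(γ) ≥ 0}`, where
`N(γ) = eX - ∑_{l∈P1} min(b̄_l²·γ, A²)` and `D(γ) = eQ - ∑_{l∈P2} min(ā_l²/γ, B²)`. -/
theorem ratio_function_continuous_strict_mono {ι : Type*} (P1 P2 : Finset ι)
    (A B : ℝ) (hA : 0 < A) (hB : 0 < B)
    (bbar abar : ι → ℝ)
    (hbbar : ∀ l ∈ P1, B ≤ bbar l) (habar : ∀ l ∈ P2, A ≤ abar l)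
    (eX eQ : ℝ) (heX : 0 < eX) (heQ : 0 < eQ) :
    ContinuousOn
      (fun γ : ℝ => γ -
        (eX - ∑ l ∈ P1, min ((bbar l) ^ 2 * γ) (A ^ 2)) /
        (eQ - ∑ l ∈ P2, min ((abar l) ^ 2 / γ) (B ^ 2)))
      {γ : ℝ | 0 < γ ∧
        0 < eQ - ∑ l ∈ P2, min ((abar l) ^ 2 / γ) (B ^ 2) ∧
        0 ≤ eX - ∑ l ∈ P1, min ((bbar l) ^ 2 * γ) (A ^ 2)} ∧
    StrictMonoOn
      (fun γ : ℝ => γ -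
        (eX - ∑ l ∈ P1, min ((bbar l) ^ 2 * γ) (A ^ 2)) /
        (eQ - ∑ l ∈ P2, min ((abar l) ^ 2 / γ) (B ^ 2)))
      {γ : ℝ | 0 < γ ∧
        0 < eQ - ∑ l ∈ P2, min ((abar l) ^ 2 / γ) (B ^ 2) ∧
        0 ≤ eX - ∑ l ∈ P1, min ((bbar l) ^ 2 * γ) (A ^ 2)} :=
  ratio_function_continuous_strict_mono_general P1 P2 A B bbar abar eX eQ
end

section
/- Convexity of the re-parameterized objective: Let P1, P2, P3 be pairwise disjoint finite index sets, and let b̄ : P1 → ℝ and ā : P2 → ℝ have nonnegative entries. Then the function (z, y) ↦ −∑_{l∈P1} b̄_l·√(z_l) − ∑_{l∈P2} ā_l·√(y_l) − ∑_{l∈P3} √(z_l)·√(y_l), defined for z : P1 ∪ P3 → ℝ and y : P2 ∪ P3 → ℝ, is convex on the nonnegative orthant {(z, y) | z_l ≥ 0 for all l ∈ P1 ∪ P3 and y_l ≥ 0 for all l ∈ P2 ∪ P3}. -/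
/-!
The negated objective is a sum of nonnegative multiples of `√z_l`, `√y_l` and of geometric means
`√z_l * √y_l`, each composed with a coordinate projection. The square root is concave on `[0, ∞)`,
the geometric mean is concave on the nonnegative quadrant (two-dimensional Cauchy–Schwarz), and
concavity survives linear precomposition, nonnegative scaling and finite sums.
-/

open Real Finset

theorem ConcaveOn.sum {𝕜 E β ι : Type*} [Semiring 𝕜] [PartialOrder 𝕜] [AddCommMonoid E]
    [AddCommMonoid β] [PartialOrder β] [IsOrderedAddMonoid β] [SMul 𝕜 E] [Module 𝕜 β]
    [PosSMulMono 𝕜 β] {s : Set E} (hs : Convex 𝕜 s) {t : Finset ι} {f : ι → E → β}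
    (hf : ∀ i ∈ t, ConcaveOn 𝕜 s (f i)) : ConcaveOn 𝕜 s fun x => ∑ i ∈ t, f i x := by
  induction t using Finset.cons_induction with
  | empty => simpa using concaveOn_const (0 : β) hs
  | cons i t hi ih =>
    simp_rw [sum_cons]
    exact (hf i (mem_cons_self i t)).add (ih fun j hj => hf j (mem_cons_of_mem hj))

theorem concaveOn_sqrt_mul_sqrt :
    ConcaveOn ℝ (Set.Ici 0 ×ˢ Set.Ici 0) fun p : ℝ × ℝ => √p.1 * √p.2 := by
  refine ⟨(convex_Ici 0).prod (convex_Ici 0), ?_⟩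
  rintro ⟨x₁, y₁⟩ ⟨hx₁, hy₁⟩ ⟨x₂, y₂⟩ ⟨hx₂, hy₂⟩ a b ha hb -
  obtain ⟨u₁, hu₁, rfl⟩ : ∃ u, 0 ≤ u ∧ u ^ 2 = x₁ := ⟨√x₁, sqrt_nonneg _, sq_sqrt hx₁⟩
  obtain ⟨u₂, hu₂, rfl⟩ : ∃ u, 0 ≤ u ∧ u ^ 2 = x₂ := ⟨√x₂, sqrt_nonneg _, sq_sqrt hx₂⟩
  obtain ⟨v₁, hv₁, rfl⟩ : ∃ v, 0 ≤ v ∧ v ^ 2 = y₁ := ⟨√y₁, sqrt_nonneg _, sq_sqrt hy₁⟩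
  obtain ⟨v₂, hv₂, rfl⟩ : ∃ v, 0 ≤ v ∧ v ^ 2 = y₂ := ⟨√y₂, sqrt_nonneg _, sq_sqrt hy₂⟩
  simp only [smul_eq_mul, Prod.smul_mk, Prod.mk_add_mk, sqrt_sq, hu₁, hu₂, hv₁, hv₂]
  rw [← sqrt_mul (by positivity), le_sqrt (by positivity) (by positivity)]
  -- Lagrange's identity: the gap is `a * b * (u₁ * v₂ - u₂ * v₁) ^ 2`
  nlinarith [mul_nonneg (mul_nonneg ha hb) (sq_nonneg (u₁ * v₂ - u₂ * v₁))]

theorem reparameterized_objective_convexOn_general {ι : Type*} [DecidableEq ι]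
    (P1 P2 P3 : Finset ι)
    (bbar abar : ι → ℝ)
    (hbbar : ∀ l ∈ P1, 0 ≤ bbar l) (habar : ∀ l ∈ P2, 0 ≤ abar l) :
    ConvexOn ℝ
      {p : (ι → ℝ) × (ι → ℝ) |
        (∀ l ∈ P1 ∪ P3, 0 ≤ p.1 l) ∧ (∀ l ∈ P2 ∪ P3, 0 ≤ p.2 l)}
      (fun p : (ι → ℝ) × (ι → ℝ) =>
        -∑ l ∈ P1, bbar l * Real.sqrt (p.1 l)
        - ∑ l ∈ P2, abar l * Real.sqrt (p.2 l)
        - ∑ l ∈ P3, Real.sqrt (p.1 l) * Real.sqrt (p.2 l)) := by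
  set s := {p : (ι → ℝ) × (ι → ℝ) |
    (∀ l ∈ P1 ∪ P3, 0 ≤ p.1 l) ∧ (∀ l ∈ P2 ∪ P3, 0 ≤ p.2 l)}
  have hs : Convex ℝ s :=
    (convex_pi fun _ _ => convex_Ici 0).prod (convex_pi fun _ _ => convex_Ici 0)
  let fstAt (l : ι) := LinearMap.proj l ∘ₗ LinearMap.fst ℝ (ι → ℝ) (ι → ℝ)
  let sndAt (l : ι) := LinearMap.proj l ∘ₗ LinearMap.snd ℝ (ι → ℝ) (ι → ℝ)
  have h1 : ∀ l ∈ P1, ConcaveOn ℝ s fun p => bbar l * √(p.1 l) := fun l hl =>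
    ((strictConcaveOn_sqrt.concaveOn.comp_linearMap (fstAt l)).smul (hbbar l hl)).subset
      (fun p hp => hp.1 l (mem_union_left _ hl)) hs
  have h2 : ∀ l ∈ P2, ConcaveOn ℝ s fun p => abar l * √(p.2 l) := fun l hl =>
    ((strictConcaveOn_sqrt.concaveOn.comp_linearMap (sndAt l)).smul (habar l hl)).subset
      (fun p hp => hp.2 l (mem_union_left _ hl)) hs
  have h3 : ∀ l ∈ P3, ConcaveOn ℝ s fun p => √(p.1 l) * √(p.2 l) := fun l hl =>
    (concaveOn_sqrt_mul_sqrt.comp_linearMap ((fstAt l).prod (sndAt l))).subset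
      (fun p hp => ⟨hp.1 l (mem_union_right _ hl), hp.2 l (mem_union_right _ hl)⟩) hs
  refine (((ConcaveOn.sum hs h1).add (ConcaveOn.sum hs h2)).add (ConcaveOn.sum hs h3)).neg.congr
    fun p _ => ?_
  simp only [Pi.neg_apply, Pi.add_apply]
  ring

/-- Convexity of the re-parameterized objective of the distance-bound problem:
`(z, y) ↦ -∑_{l∈P1} b̄_l·√(z_l) - ∑_{l∈P2} ā_l·√(y_l) - ∑_{l∈P3} √(z_l)·√(y_l)`
is convex on the nonnegative orthant. -/
theorem reparameterized_objective_convexOn {ι : Type*} [DecidableEq ι]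
    (P1 P2 P3 : Finset ι)
    (h12 : Disjoint P1 P2) (h13 : Disjoint P1 P3) (h23 : Disjoint P2 P3)
    (bbar abar : ι → ℝ)
    (hbbar : ∀ l ∈ P1, 0 ≤ bbar l) (habar : ∀ l ∈ P2, 0 ≤ abar l) :
    ConvexOn ℝ
      {p : (ι → ℝ) × (ι → ℝ) |
        (∀ l ∈ P1 ∪ P3, 0 ≤ p.1 l) ∧ (∀ l ∈ P2 ∪ P3, 0 ≤ p.2 l)}
      (fun p : (ι → ℝ) × (ι → ℝ) =>
        -∑ l ∈ P1, bbar l * Real.sqrt (p.1 l)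
        - ∑ l ∈ P2, abar l * Real.sqrt (p.2 l)
        - ∑ l ∈ P3, Real.sqrt (p.1 l) * Real.sqrt (p.2 l)) :=
  reparameterized_objective_convexOn_general P1 P2 P3 bbar abar hbbar habar
end
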